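/- arXiv:2311.06489 — 2 statements merged into one kernel-verified Lean document; each statement's English description precedes it below -/
import Mathlib

section
/- Let m ≥ 2 and let C be a linear code over ℤ/mℤ of length n, with dual code C^⊥, and let ρ : ℤ^n → (ℤ/mℤ)^n be componentwise reduction modulo m. Then the heat equation ∂_t u(x,t) = Δ_{ℤ^n} u(x,t) for (x,t) ∈ ℤ^n × ℝ_{≥0}, with initial condition u(x,0) = 1 if x ∈ ρ^{-1}(C) and u(x,0) = 0 otherwise, has a unique bounded solution u : ℤ^n × ℝ_{≥0} → ℝ which is differentiable in t ∈ ℝ_{>0} and continuous in t ∈ ℝ_{≥0}, and this solution is given explicitly by u(x,t) = e^{-t} (#C/m^n) Σ_{c=(c_1,…,c_n)∈C^⊥} ∏_{j=1}^n e^{(t/n) cos(2πc_j/m)} e^{2πi x_j c_j/m}. -/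
open scoped Real
open Complex
open scoped Classical

/-- `u` is a solution of the semidiscrete heat equation
`∂_t u = Δ_{ℤ^n} u` on `ℤ^n × ℝ_{≥0}` with initial condition `u0`,
where `Δ_{ℤ^n} f(x) = (1/2n) Σ_j (f(x+e_j)+f(x−e_j)−2f(x))`; we require `u` to be
continuous in `t ∈ ℝ_{≥0}` and differentiable in `t ∈ ℝ_{>0}`. -/
def IsHeatSolution (n : ℕ) (u0 : (Fin n → ℤ) → ℝ) (u : (Fin n → ℤ) → ℝ → ℝ) : Prop :=
  (∀ x, ContinuousOn (u x) (Set.Ici 0)) ∧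
  (∀ x t, 0 ≤ t → HasDerivWithinAt (u x)
      ((1 / (2 * (n : ℝ))) *
        ∑ j, (u (x + Pi.single j 1) t + u (x - Pi.single j 1) t - 2 * u x t))
      (Set.Ici 0) t) ∧
  (∀ x t, 0 < t → HasDerivAt (u x)
      ((1 / (2 * (n : ℝ))) *
        ∑ j, (u (x + Pi.single j 1) t + u (x - Pi.single j 1) t - 2 * u x t)) t) ∧
  (∀ x, u x 0 = u0 x)

/-- `u` is bounded on `ℤ^n × ℝ_{≥0}`. -/
def IsBoundedSol (n : ℕ) (u : (Fin n → ℤ) → ℝ → ℝ) : Prop :=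
  ∃ M : ℝ, ∀ x t, 0 ≤ t → |u x t| ≤ M

/-- The dual code `C^⊥ = {v : x·y = 0 for all y ∈ C}`. -/
def dualCode {m n : ℕ} (C : Submodule (ZMod m) (Fin n → ZMod m)) :
    Set (Fin n → ZMod m) :=
  {v | ∀ c ∈ C, ∑ i, v i * c i = 0}

/-!
A plane wave `x ↦ ∏ⱼ exp (i θⱼ xⱼ)` is an eigenfunction of the discrete Laplacian with eigenvalue
`(1/n) Σⱼ (cos θⱼ - 1) ≤ 0`, so multiplying it by `exp (t · eigenvalue)` gives a bounded solution
of the heat equation. Writing `𝟙_C(x) = Σ_{c ∈ C} δ(x - c)` and expanding `δ` in the characters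
of `(ℤ/mℤ)ⁿ`, orthogonality gives `𝟙_C(x) = #C/mⁿ · Σ_{c ∈ C^⊥} exp (2πi x·c/m)`; the matching
combination of heat modes is the solution, and it is real because its imaginary part is a bounded
solution with zero initial data.

Uniqueness: a bounded solution `w` with `w(·, 0) = 0` satisfies `w(t) = ∫₀ᵗ Δw`, and iterating
this with `|Δf| ≤ 2 sup |f|` gives `|w(t)| ≤ M (2t)ᵏ / k!` for every `k`.
-/

open Finset Filter Topology

noncomputable def discreteLaplacian {E : Type*} [AddCommGroup E] [Module ℝ E] (n : ℕ)
    (f : (Fin n → ℤ) → E) (x : Fin n → ℤ) : E :=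
  (1 / (2 * (n : ℝ))) • ∑ j, (f (x + Pi.single j 1) + f (x - Pi.single j 1) - (2 : ℝ) • f x)

section Laplacian

variable {n : ℕ} {E F : Type*}

section Algebraic

variable [AddCommGroup E] [Module ℝ E] [AddCommGroup F] [Module ℝ F]

lemma LinearMap.map_discreteLaplacian (L : E →ₗ[ℝ] F) (f : (Fin n → ℤ) → E) (x : Fin n → ℤ) :
    L (discreteLaplacian n f x) = discreteLaplacian n (fun y => L (f y)) x := by
  simp [discreteLaplacian, map_sum]

lemma discreteLaplacian_sub (f g : (Fin n → ℤ) → E) (x : Fin n → ℤ) :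
    discreteLaplacian n (fun y => f y - g y) x =
      discreteLaplacian n f x - discreteLaplacian n g x := by
  simp only [discreteLaplacian, ← smul_sub, ← sum_sub_distrib]
  congr 1
  refine sum_congr rfl fun j _ => ?_
  rw [smul_sub]
  abel

lemma discreteLaplacian_finset_sum {ι : Type*} (s : Finset ι) (f : ι → (Fin n → ℤ) → E)
    (x : Fin n → ℤ) :
    discreteLaplacian n (fun y => ∑ i ∈ s, f i y) x = ∑ i ∈ s, discreteLaplacian n (f i) x := by
  simp only [discreteLaplacian, smul_sum, ← sum_add_distrib, ← sum_sub_distrib]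
  rw [sum_comm]

lemma discreteLaplacian_const_smul {𝕜 : Type*} [Monoid 𝕜] [DistribMulAction 𝕜 E]
    [SMulCommClass ℝ 𝕜 E] (a : 𝕜) (f : (Fin n → ℤ) → E) (x : Fin n → ℤ) :
    discreteLaplacian n (fun y => a • f y) x = a • discreteLaplacian n f x := by
  simp only [discreteLaplacian, smul_comm _ a, ← smul_add, ← smul_sub, ← smul_sum]

end Algebraic

lemma abs_discreteLaplacian_le {f : (Fin n → ℤ) → ℝ} {B : ℝ} (hf : ∀ y, |f y| ≤ B)
    (x : Fin n → ℤ) : |discreteLaplacian n f x| ≤ 2 * B := by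
  have hB : 0 ≤ B := (abs_nonneg _).trans (hf x)
  have hterm : ∀ j, |f (x + Pi.single j 1) + f (x - Pi.single j 1) - (2 : ℝ) • f x| ≤ 4 * B := by
    intro j
    have h₁ := abs_le.mp (hf (x + Pi.single j 1))
    have h₂ := abs_le.mp (hf (x - Pi.single j 1))
    have h₃ := abs_le.mp (hf x)
    rw [smul_eq_mul, abs_le]
    constructor <;> linarith
  calc |discreteLaplacian n f x|
      = 1 / (2 * n) * |∑ j, (f (x + Pi.single j 1) + f (x - Pi.single j 1) - (2 : ℝ) • f x)| := by
        rw [discreteLaplacian, smul_eq_mul, abs_mul, abs_of_nonneg (by positivity)]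
    _ ≤ 1 / (2 * n) * (n * (4 * B)) := by
        gcongr
        refine (abs_sum_le_sum_abs _ _).trans ?_
        simpa using sum_le_sum fun j (_ : j ∈ Finset.univ) => hterm j
    _ ≤ 2 * B := by
        rcases n.eq_zero_or_pos with rfl | hn
        · simpa using hB
        · field_simp
          linarith

end Laplacian

lemma isHeatSolution_iff {n : ℕ} {u0 : (Fin n → ℤ) → ℝ} {u : (Fin n → ℤ) → ℝ → ℝ} :
    IsHeatSolution n u0 u ↔ (∀ x, ContinuousOn (u x) (Set.Ici 0)) ∧
      (∀ x t, 0 ≤ t →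
        HasDerivWithinAt (u x) (discreteLaplacian n (fun y => u y t) x) (Set.Ici 0) t) ∧
      (∀ x t, 0 < t → HasDerivAt (u x) (discreteLaplacian n (fun y => u y t) x) t) ∧
      (∀ x, u x 0 = u0 x) :=
  Iff.rfl

section HeatSolutions

variable {n : ℕ}

lemma IsBoundedSol.sub {u v : (Fin n → ℤ) → ℝ → ℝ} (hu : IsBoundedSol n u)
    (hv : IsBoundedSol n v) : IsBoundedSol n (fun x t => u x t - v x t) := by
  obtain ⟨M, hM⟩ := hu
  obtain ⟨N, hN⟩ := hv
  exact ⟨M + N, fun x t ht => (abs_sub _ _).trans (add_le_add (hM x t ht) (hN x t ht))⟩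

lemma IsHeatSolution.sub {u0 v0 : (Fin n → ℤ) → ℝ} {u v : (Fin n → ℤ) → ℝ → ℝ}
    (hu : IsHeatSolution n u0 u) (hv : IsHeatSolution n v0 v) :
    IsHeatSolution n (u0 - v0) (fun x t => u x t - v x t) := by
  rw [isHeatSolution_iff] at *
  obtain ⟨hu₁, hu₂, hu₃, hu₄⟩ := hu
  obtain ⟨hv₁, hv₂, hv₃, hv₄⟩ := hv
  refine ⟨fun x => (hu₁ x).sub (hv₁ x), fun x t ht => ?_, fun x t ht => ?_, fun x => ?_⟩
  · rw [discreteLaplacian_sub]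
    exact (hu₂ x t ht).sub (hv₂ x t ht)
  · rw [discreteLaplacian_sub]
    exact (hu₃ x t ht).sub (hv₃ x t ht)
  · simp [hu₄, hv₄]

lemma IsHeatSolution.abs_le_pow_div_factorial {w : (Fin n → ℤ) → ℝ → ℝ}
    (hw : IsHeatSolution n 0 w) {M : ℝ} (hM : ∀ x t, 0 ≤ t → |w x t| ≤ M) (k : ℕ) :
    ∀ x t, 0 ≤ t → |w x t| ≤ M * (2 * t) ^ k / k.factorial := by
  obtain ⟨hcont, hderiv, -, hinit⟩ := isHeatSolution_iff.mp hw
  induction k with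
  | zero => simpa using hM
  | succ k ih =>
    intro x t ht
    have hΔcont :
        ContinuousOn (fun s => discreteLaplacian n (fun y => w y s) x) (Set.Icc 0 t) := by
      refine ContinuousOn.mono ?_ Set.Icc_subset_Ici_self
      exact (continuousOn_finsetSum _ fun j _ => ((hcont _).add (hcont _)).sub
        ((hcont x).const_smul (2 : ℝ))).const_smul (1 / (2 * (n : ℝ)))
    have hFTC : w x t = ∫ s in (0)..t, discreteLaplacian n (fun y => w y s) x := by
      rw [intervalIntegral.integral_eq_sub_of_hasDeriv_right_of_le ht
        ((hcont x).mono Set.Icc_subset_Ici_self)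
        (fun s hs => (hderiv x s hs.1.le).mono (Set.Ioi_subset_Ici hs.1.le))
        (hΔcont.intervalIntegrable_of_Icc ht), hinit, Pi.zero_apply, sub_zero]
    have hbound : ∀ s ∈ Set.Icc 0 t, |discreteLaplacian n (fun y => w y s) x|
        ≤ M * 2 ^ (k + 1) / k.factorial * s ^ k := fun s hs =>
      (abs_discreteLaplacian_le (fun y => ih y s hs.1) x).trans_eq (by ring)
    calc |w x t| = |∫ s in (0)..t, discreteLaplacian n (fun y => w y s) x| := by rw [← hFTC]
      _ ≤ ∫ s in (0)..t, |discreteLaplacian n (fun y => w y s) x| :=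
          intervalIntegral.abs_integral_le_integral_abs ht
      _ ≤ ∫ s in (0)..t, M * 2 ^ (k + 1) / k.factorial * s ^ k :=
          intervalIntegral.integral_mono_on ht (hΔcont.abs.intervalIntegrable_of_Icc ht)
            ((by fun_prop : Continuous _).intervalIntegrable _ _) hbound
      _ = M * (2 * t) ^ (k + 1) / (k + 1).factorial := by
          rw [intervalIntegral.integral_const_mul, integral_pow, Nat.factorial_succ]
          push_cast
          field_simp
          ring

lemma IsHeatSolution.eq_zero_of_isBoundedSol {w : (Fin n → ℤ) → ℝ → ℝ}
    (hw : IsHeatSolution n 0 w) (hb : IsBoundedSol n w) : ∀ x t, 0 ≤ t → w x t = 0 := by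
  obtain ⟨M, hM⟩ := hb
  intro x t ht
  have hlim : Tendsto (fun k : ℕ => M * (2 * t) ^ k / k.factorial) atTop (𝓝 0) := by
    simpa [mul_div_assoc] using
      (FloorSemiring.tendsto_pow_div_factorial_atTop (2 * t)).const_mul M
  exact abs_nonpos_iff.mp (ge_of_tendsto' hlim fun k => hw.abs_le_pow_div_factorial hM k x t ht)

lemma IsHeatSolution.eq_of_isBoundedSol {u0 : (Fin n → ℤ) → ℝ} {u v : (Fin n → ℤ) → ℝ → ℝ}
    (hu : IsHeatSolution n u0 u) (hv : IsHeatSolution n u0 v) (hu' : IsBoundedSol n u)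
    (hv' : IsBoundedSol n v) : ∀ x t, 0 ≤ t → u x t = v x t := fun x t ht =>
  sub_eq_zero.mp <| by
    simpa using (sub_self u0 ▸ hu.sub hv).eq_zero_of_isBoundedSol (hu'.sub hv') x t ht

end HeatSolutions

section SolvesHeatEquation

variable {n : ℕ} {E F : Type*} [NormedAddCommGroup E] [NormedSpace ℝ E]
  [NormedAddCommGroup F] [NormedSpace ℝ F]

def SolvesHeatEquation (n : ℕ) (u : (Fin n → ℤ) → ℝ → E) : Prop :=
  ∀ x t, HasDerivAt (u x) (discreteLaplacian n (fun y => u y t) x) t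

lemma SolvesHeatEquation.finset_sum {ι : Type*} (s : Finset ι) {u : ι → (Fin n → ℤ) → ℝ → E}
    (hu : ∀ i ∈ s, SolvesHeatEquation n (u i)) :
    SolvesHeatEquation n (fun x t => ∑ i ∈ s, u i x t) := fun x t => by
  rw [discreteLaplacian_finset_sum]
  exact HasDerivAt.fun_sum fun i hi => hu i hi x t

lemma SolvesHeatEquation.const_smul {𝕜 : Type*} [Semiring 𝕜] [Module 𝕜 E]
    [SMulCommClass ℝ 𝕜 E] [ContinuousConstSMul 𝕜 E] {u : (Fin n → ℤ) → ℝ → E}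
    (hu : SolvesHeatEquation n u) (a : 𝕜) : SolvesHeatEquation n (fun x t => a • u x t) :=
  fun x t => by
    rw [discreteLaplacian_const_smul]
    exact (hu x t).const_smul a

lemma SolvesHeatEquation.clm_comp {u : (Fin n → ℤ) → ℝ → E} (hu : SolvesHeatEquation n u)
    (L : E →L[ℝ] F) : SolvesHeatEquation n (fun x t => L (u x t)) := fun x t => by
  have := L.hasFDerivAt.comp_hasDerivAt t (hu x t)
  rwa [← L.coe_coe, LinearMap.map_discreteLaplacian] at this

lemma SolvesHeatEquation.isHeatSolution {u0 : (Fin n → ℤ) → ℝ} {u : (Fin n → ℤ) → ℝ → ℝ}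
    (hu : SolvesHeatEquation n u) (h0 : ∀ x, u x 0 = u0 x) : IsHeatSolution n u0 u :=
  isHeatSolution_iff.mpr ⟨fun x => HasDerivAt.continuousOn fun t _ => hu x t,
    fun x t _ => (hu x t).hasDerivWithinAt, fun x t _ => hu x t, h0⟩

lemma isBoundedSol_clm_comp {u : (Fin n → ℤ) → ℝ → E} {M : ℝ}
    (hu : ∀ x t, 0 ≤ t → ‖u x t‖ ≤ M) (L : E →L[ℝ] ℝ) :
    IsBoundedSol n (fun x t => L (u x t)) :=
  ⟨‖L‖ * M, fun x t ht => (L.le_opNorm _).trans (by gcongr; exact hu x t ht)⟩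

end SolvesHeatEquation

section PlaneWaves

variable {n : ℕ}

noncomputable def planeWave (θ : Fin n → ℝ) (x : Fin n → ℤ) : ℂ :=
  ∏ j, exp (θ j * x j * I)

noncomputable def heatSymbol (θ : Fin n → ℝ) : ℝ :=
  (∑ j, (Real.cos (θ j) - 1)) / n

noncomputable def heatMode (θ : Fin n → ℝ) (x : Fin n → ℤ) (t : ℝ) : ℂ :=
  exp (t * heatSymbol θ) * planeWave θ x

lemma norm_planeWave (θ : Fin n → ℝ) (x : Fin n → ℤ) : ‖planeWave θ x‖ = 1 := by
  simp only [planeWave, norm_prod]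
  exact prod_eq_one fun j _ => by exact_mod_cast norm_exp_ofReal_mul_I (θ j * x j)

lemma planeWave_add_single (θ : Fin n → ℝ) (x : Fin n → ℤ) (j : Fin n) (a : ℤ) :
    planeWave θ (x + Pi.single j a) = planeWave θ x * exp (θ j * a * I) := by
  simp only [planeWave, Pi.add_apply, Int.cast_add, mul_add, add_mul, exp_add, prod_mul_distrib]
  congr 1
  rw [Fintype.prod_eq_single j fun i hi => by simp [hi]]
  simp

lemma discreteLaplacian_planeWave (θ : Fin n → ℝ) (x : Fin n → ℤ) :
    discreteLaplacian n (planeWave θ) x = heatSymbol θ * planeWave θ x := by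
  have hterm : ∀ j, planeWave θ (x + Pi.single j 1) + planeWave θ (x - Pi.single j 1)
      - (2 : ℝ) • planeWave θ x = 2 * planeWave θ x * (cos (θ j) - 1) := by
    intro j
    rw [sub_eq_add_neg x, ← Pi.single_neg, planeWave_add_single, planeWave_add_single,
      real_smul, show 2 * planeWave θ x * (cos (θ j) - 1)
        = planeWave θ x * (2 * cos (θ j)) - 2 * planeWave θ x by ring, two_cos]
    push_cast
    ring_nf
  rw [discreteLaplacian, sum_congr rfl fun j _ => hterm j, ← mul_sum, real_smul, heatSymbol]
  push_cast
  ring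

lemma heatSymbol_nonpos (θ : Fin n → ℝ) : heatSymbol θ ≤ 0 :=
  div_nonpos_of_nonpos_of_nonneg (sum_nonpos fun j _ => by linarith [Real.cos_le_one (θ j)])
    n.cast_nonneg

lemma solvesHeatEquation_heatMode (θ : Fin n → ℝ) : SolvesHeatEquation n (heatMode θ) :=
  fun x t => by
    have hexp : HasDerivAt (fun t : ℝ => exp (t * heatSymbol θ))
        (exp (t * heatSymbol θ) * heatSymbol θ) t := by
      simpa using ((hasDerivAt_id t).ofReal_comp.mul_const (heatSymbol θ : ℂ)).cexp
    refine (hexp.mul_const (planeWave θ x)).congr_deriv ?_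
    rw [show (fun y => heatMode θ y t) = fun y => exp (t * heatSymbol θ) • planeWave θ y from rfl,
      discreteLaplacian_const_smul, discreteLaplacian_planeWave, smul_eq_mul]
    ring

lemma norm_heatMode_le_one (θ : Fin n → ℝ) (x : Fin n → ℤ) {t : ℝ} (ht : 0 ≤ t) :
    ‖heatMode θ x t‖ ≤ 1 := by
  rw [heatMode, norm_mul, norm_planeWave, mul_one, ← ofReal_mul, norm_exp_ofReal]
  exact Real.exp_le_one_iff.mpr (mul_nonpos_of_nonneg_of_nonpos ht (heatSymbol_nonpos θ))

lemma heatMode_zero (θ : Fin n → ℝ) (x : Fin n → ℤ) : heatMode θ x 0 = planeWave θ x := by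
  simp [heatMode]

lemma heatMode_eq_prod (hn : 0 < n) (θ : Fin n → ℝ) (x : Fin n → ℤ) (t : ℝ) :
    heatMode θ x t =
      exp (-t) * ∏ j, exp (((t / n : ℝ) : ℂ) * Real.cos (θ j)) * exp (θ j * x j * I) := by
  have hn' : (n : ℂ) ≠ 0 := by exact_mod_cast hn.ne'
  rw [heatMode, planeWave, prod_mul_distrib, ← mul_assoc]
  congr 1
  rw [← exp_sum, ← exp_add]
  congr 1
  simp only [heatSymbol, sum_sub_distrib, sum_const, card_univ, Fintype.card_fin, nsmul_eq_mul,
    mul_one]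
  push_cast
  rw [← mul_sum]
  field_simp
  ring

end PlaneWaves

section CodeFourier

open ZMod

variable {m n : ℕ}

lemma mem_dualCode_iff {C : Submodule (ZMod m) (Fin n → ZMod m)} {z : Fin n → ZMod m} :
    z ∈ dualCode C ↔ ∀ c ∈ C, z ⬝ᵥ c = 0 :=
  Iff.rfl

lemma neg_mem_dualCode_iff {C : Submodule (ZMod m) (Fin n → ZMod m)} {z : Fin n → ZMod m} :
    -z ∈ dualCode C ↔ z ∈ dualCode C := by
  simp only [mem_dualCode_iff, neg_dotProduct, neg_eq_zero]

variable [NeZero m]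

lemma sum_stdAddChar_dotProduct_eq_ite {G : Type*} [AddGroup G] [Fintype G]
    (f : G →+ (Fin n → ZMod m)) (z : Fin n → ZMod m) :
    ∑ g, stdAddChar (f g ⬝ᵥ z) = if ∀ g, f g ⬝ᵥ z = 0 then (Fintype.card G : ℂ) else 0 := by
  let ψ : AddChar G ℂ :=
    { toFun := fun g => stdAddChar (f g ⬝ᵥ z)
      map_zero_eq_one' := by simp
      map_add_eq_mul' := fun a b => by simp [add_dotProduct, AddChar.map_add_eq_mul] }
  have hψ : ψ = 0 ↔ ∀ g, f g ⬝ᵥ z = 0 := by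
    simp only [AddChar.eq_zero_iff]
    exact forall_congr' fun g => injective_stdAddChar.eq_iff' (AddChar.map_zero_eq_one _)
  rw [← if_congr hψ rfl rfl]
  exact AddChar.sum_eq_ite ψ

lemma sum_stdAddChar_dotProduct (z : Fin n → ZMod m) :
    ∑ y : Fin n → ZMod m, stdAddChar (y ⬝ᵥ z) = if z = 0 then (m : ℂ) ^ n else 0 := by
  have hz : (∀ y : Fin n → ZMod m, y ⬝ᵥ z = 0) ↔ z = 0 :=
    ⟨fun h => funext fun j => by simpa using h (Pi.single j 1), fun h y => by simp [h]⟩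
  simpa [hz] using sum_stdAddChar_dotProduct_eq_ite (AddMonoidHom.id _) z

lemma sum_submodule_stdAddChar_dotProduct (C : Submodule (ZMod m) (Fin n → ZMod m))
    (z : Fin n → ZMod m) :
    ∑ c : C, stdAddChar ((c : Fin n → ZMod m) ⬝ᵥ z) =
      if z ∈ dualCode C then (Nat.card C : ℂ) else 0 := by
  have hz : (∀ c : C, (c : Fin n → ZMod m) ⬝ᵥ z = 0) ↔ z ∈ dualCode C := by
    simp only [Subtype.forall, mem_dualCode_iff, dotProduct_comm z]
  rw [← if_congr hz rfl rfl, Nat.card_eq_fintype_card]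
  exact sum_stdAddChar_dotProduct_eq_ite C.subtype.toAddMonoidHom z

lemma indicator_eq_sum_dualCode (C : Submodule (ZMod m) (Fin n → ZMod m))
    (x : Fin n → ZMod m) :
    (if x ∈ C then 1 else 0 : ℂ) =
      (Nat.card C / m ^ n : ℂ) * ∑ z : dualCode C, stdAddChar (x ⬝ᵥ z) := by
  have hm : (m : ℂ) ^ n ≠ 0 := pow_ne_zero _ (Nat.cast_ne_zero.mpr (NeZero.ne m))
  suffices (m : ℂ) ^ n * (if x ∈ C then 1 else 0) =
      Nat.card C * ∑ z : dualCode C, stdAddChar (x ⬝ᵥ z) by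
    rw [div_mul_eq_mul_div, eq_div_iff hm, mul_comm, this]
  calc (m : ℂ) ^ n * (if x ∈ C then 1 else 0)
      = ∑ c : C, ∑ y, stdAddChar (y ⬝ᵥ (x - (c : Fin n → ZMod m))) := by
        simp_rw [sum_stdAddChar_dotProduct, sub_eq_zero]
        by_cases hx : x ∈ C
        · rw [if_pos hx, mul_one, Fintype.sum_eq_single ⟨x, hx⟩
            fun c hc => if_neg fun h => hc (Subtype.ext h.symm), if_pos rfl]
        · rw [if_neg hx, mul_zero]
          exact (sum_eq_zero fun c _ => if_neg fun h => hx (by rw [h]; exact c.2)).symm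
    _ = ∑ y, stdAddChar (x ⬝ᵥ y) * ∑ c : C, stdAddChar ((c : Fin n → ZMod m) ⬝ᵥ -y) := by
        rw [sum_comm]
        refine sum_congr rfl fun y _ => ?_
        rw [mul_sum]
        refine sum_congr rfl fun c _ => ?_
        rw [← AddChar.map_add_eq_mul, dotProduct_sub, dotProduct_neg, dotProduct_comm x,
          dotProduct_comm (c : Fin n → ZMod m) y, sub_eq_add_neg]
    _ = ∑ y, stdAddChar (x ⬝ᵥ y) * if y ∈ dualCode C then (Nat.card C : ℂ) else 0 := by
        refine sum_congr rfl fun y _ => ?_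
        rw [sum_submodule_stdAddChar_dotProduct, neg_mem_dualCode_iff]
    _ = Nat.card C * ∑ z : dualCode C, stdAddChar (x ⬝ᵥ z) := by
        rw [mul_sum]
        simp_rw [mul_ite, mul_zero]
        rw [← sum_filter, sum_subtype _ (p := (· ∈ dualCode C)) (by simp)]
        exact sum_congr rfl fun z _ => mul_comm _ _

end CodeFourier

section CodeHeatSolution

open ZMod

variable {m n : ℕ} [NeZero m]

noncomputable def codeFrequency (c : Fin n → ZMod m) : Fin n → ℝ :=
  fun j => 2 * π * (c j).val / m

lemma planeWave_codeFrequency (c : Fin n → ZMod m) (x : Fin n → ℤ) :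
    planeWave (codeFrequency c) x = stdAddChar ((fun i => (x i : ZMod m)) ⬝ᵥ c) := by
  have hcast : (fun i => (x i : ZMod m)) ⬝ᵥ c = ((∑ j, x j * (c j).val : ℤ) : ZMod m) := by
    simp [dotProduct]
  rw [hcast, stdAddChar_coe, planeWave, ← exp_sum]
  push_cast
  rw [mul_sum, sum_div]
  refine congrArg exp (sum_congr rfl fun j _ => ?_)
  simp only [codeFrequency]
  push_cast
  ring

noncomputable def codeHeatSolution (C : Submodule (ZMod m) (Fin n → ZMod m))
    (x : Fin n → ℤ) (t : ℝ) : ℂ :=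
  (Nat.card C / m ^ n : ℂ) * ∑ c : dualCode C, heatMode (codeFrequency (c : Fin n → ZMod m)) x t

variable (C : Submodule (ZMod m) (Fin n → ZMod m))

lemma solvesHeatEquation_codeHeatSolution : SolvesHeatEquation n (codeHeatSolution C) :=
  (SolvesHeatEquation.finset_sum univ fun (c : dualCode C) _ =>
    solvesHeatEquation_heatMode (codeFrequency (c : Fin n → ZMod m))).const_smul
      (Nat.card C / m ^ n : ℂ)

lemma codeHeatSolution_zero (x : Fin n → ℤ) :
    codeHeatSolution C x 0 = if (fun i => (x i : ZMod m)) ∈ C then 1 else 0 := by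
  simp only [codeHeatSolution, heatMode_zero, planeWave_codeFrequency, indicator_eq_sum_dualCode]

lemma norm_codeHeatSolution_le (x : Fin n → ℤ) {t : ℝ} (ht : 0 ≤ t) :
    ‖codeHeatSolution C x t‖ ≤ Nat.card C / m ^ n * Fintype.card ↥(dualCode C) := by
  rw [codeHeatSolution, norm_mul]
  gcongr
  · simp
  · calc ‖∑ c : dualCode C, heatMode (codeFrequency (c : Fin n → ZMod m)) x t‖
        ≤ ∑ c : dualCode C, ‖heatMode (codeFrequency (c : Fin n → ZMod m)) x t‖ :=
          norm_sum_le _ _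
      _ ≤ ∑ _c : dualCode C, (1 : ℝ) := sum_le_sum fun c _ => norm_heatMode_le_one _ x ht
      _ = Fintype.card ↥(dualCode C) := by rw [sum_const, card_univ, nsmul_one]

lemma codeHeatSolution_eq (hn : 0 < n) (x : Fin n → ℤ) (t : ℝ) :
    codeHeatSolution C x t = Complex.exp (-(t : ℂ)) * ((Nat.card C : ℂ) / (m : ℂ) ^ n) *
      ∑' c : dualCode C,
        ∏ j, Complex.exp (((t / n : ℝ) : ℂ) *
            Real.cos (2 * Real.pi * (((c : Fin n → ZMod m) j).val : ℝ) / (m : ℝ))) *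
          Complex.exp (2 * Real.pi * I * (x j : ℝ) *
            (((c : Fin n → ZMod m) j).val : ℝ) / (m : ℝ)) := by
  rw [codeHeatSolution, tsum_fintype, mul_comm (exp (-(t : ℂ))), mul_assoc]
  congr 1
  rw [mul_sum]
  refine sum_congr rfl fun c _ => ?_
  rw [heatMode_eq_prod hn]
  congr 1
  refine prod_congr rfl fun j _ => ?_
  simp only [codeFrequency]
  push_cast
  ring_nf

end CodeHeatSolution

/-- Theorem 1.3 of the paper: for a linear code `C` over `ℤ/mℤ` of length
`n` (`m ≥ 2`), the heat equation on `ℤ^n` with initial condition the indicator function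
of `ρ⁻¹(C)` has a unique bounded solution (differentiable in `t > 0` and continuous in
`t ≥ 0`), given explicitly by
`u(x,t) = e^{−t} (#C/mⁿ) Σ_{c∈C^⊥} ∏_j e^{(t/n)cos(2πc_j/m)} e^{2πi x_j c_j/m}`. -/
theorem heat_equation_linear_code (m n : ℕ) (hm : 2 ≤ m) (hn : 0 < n)
    (C : Submodule (ZMod m) (Fin n → ZMod m)) :
    ∃ u : (Fin n → ℤ) → ℝ → ℝ,
      (IsBoundedSol n u ∧
        IsHeatSolution n (fun x => if (fun i => ((x i : ZMod m))) ∈ C then 1 else 0) u) ∧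
      (∀ v : (Fin n → ℤ) → ℝ → ℝ,
        IsBoundedSol n v ∧
          IsHeatSolution n (fun x => if (fun i => ((x i : ZMod m))) ∈ C then 1 else 0) v →
        ∀ x t, 0 ≤ t → v x t = u x t) ∧
      (∀ (x : Fin n → ℤ) (t : ℝ), 0 ≤ t →
        (u x t : ℂ) = Complex.exp (-(t : ℂ)) * ((Nat.card C : ℂ) / (m : ℂ) ^ n) *
          ∑' c : dualCode C,
            ∏ j, Complex.exp (((t / n : ℝ) : ℂ) *
                Real.cos (2 * Real.pi * (((c : Fin n → ZMod m) j).val : ℝ) / (m : ℝ))) *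
              Complex.exp (2 * Real.pi * I * (x j : ℝ) *
                (((c : Fin n → ZMod m) j).val : ℝ) / (m : ℝ))) := by
  have : NeZero m := ⟨by omega⟩
  have hU := solvesHeatEquation_codeHeatSolution C
  have hbdd := fun x t (ht : 0 ≤ t) => norm_codeHeatSolution_le C x ht
  have hre := (hU.clm_comp reCLM).isHeatSolution
    (u0 := fun x => if (fun i => ((x i : ZMod m))) ∈ C then 1 else 0)
    fun x => by simp [codeHeatSolution_zero, apply_ite]
  have him : ∀ x t, 0 ≤ t → (codeHeatSolution C x t).im = 0 :=
    ((hU.clm_comp imCLM).isHeatSolution (u0 := 0) fun x => by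
      simp [codeHeatSolution_zero, apply_ite]).eq_zero_of_isBoundedSol
      (isBoundedSol_clm_comp hbdd imCLM)
  refine ⟨fun x t => (codeHeatSolution C x t).re, ⟨isBoundedSol_clm_comp hbdd reCLM, hre⟩,
    fun v hv => hv.2.eq_of_isBoundedSol hre hv.1 (isBoundedSol_clm_comp hbdd reCLM),
    fun x t ht => ?_⟩
  rw [← codeHeatSolution_eq C hn]
  exact Complex.ext rfl (by simp [him x t ht])
end

section
/- Let m ≥ 2, let C be a linear code over ℤ/mℤ of length n, let ρ : ℤ^n → (ℤ/mℤ)^n be componentwise reduction mod m, and for y ∈ ℤ and t ∈ ℂ set A_y(t) = Σ_{γ ∈ y+mℤ} I_γ(t) = (1/m) Σ_{j=0}^{m−1} exp(t cos(2πj/m)) e^{2πi y j/m}. Then for every x = (x_1,…,x_n) ∈ ℤ^n and every t ∈ ℂ: Σ_{γ=(γ_j) ∈ x+ρ^{-1}(C)} ∏_{j=1}^n I_{γ_j}(t) = cwe_{ρ(x)+C}(A_0(t), A_1(t), …, A_{m−1}(t)). -/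
open scoped Real
open Complex

/-- The modified Bessel function of the first kind with integer order,
`I_x(t) = (1/π) ∫₀^π e^{t cos θ} cos(xθ) dθ`. -/
noncomputable def besselI (x : ℝ) (t : ℂ) : ℂ :=
  (Real.pi : ℂ)⁻¹ * ∫ θ in (0:ℝ)..Real.pi, Complex.exp (t * Real.cos θ) * (Real.cos (x * θ) : ℂ)

/-- `A_y(t) = Σ_{γ ∈ y+mℤ} I_γ(t)`. -/
noncomputable def Aseq (m : ℕ) (y : ℤ) (t : ℂ) : ℂ :=
  ∑' k : ℤ, besselI ((y : ℝ) + (m : ℝ) * (k : ℝ)) t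

/-- `n_ℓ(c)`: the number of components of `c` equal to `ℓ` mod `m`. -/
noncomputable def nComp {m n : ℕ} (c : Fin n → ZMod m) (ℓ : ℕ) : ℕ :=
  Nat.card {j : Fin n // c j = (ℓ : ZMod m)}

/-- The complete weight enumerator of a subset `B ⊆ (ℤ/mℤ)^n`,
`cwe_B(X_0,…,X_{m−1}) = Σ_{c∈B} ∏_{ℓ=0}^{m−1} X_ℓ^{n_ℓ(c)}`. -/
noncomputable def cwe {m n : ℕ} (B : Set (Fin n → ZMod m)) (X : ℕ → ℂ) : ℂ :=
  ∑' c : B, ∏ ℓ ∈ Finset.range m, X ℓ ^ nComp (c : Fin n → ZMod m) ℓ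

/-! Writing each `γ ∈ ℤⁿ` uniquely as `γ = r + m k` with `r ∈ [0, m)ⁿ` and `k ∈ ℤⁿ` identifies
`x + ρ⁻¹(C)` with `(ρ(x) + C) × ℤⁿ`, so the left-hand side splits into a finite sum over the coset
of sums over `ℤⁿ`; each of these factors as `∏ⱼ A_{cⱼ}(t)`, and grouping equal coordinates gives
the complete weight enumerator. The rearrangements are justified by `I_k(t) = O(1/k²)`, which
comes from integrating by parts twice: the boundary terms vanish because `sin (kπ) = 0` and
`θ ↦ e^{t cos θ}` has zero derivative at `0` and `π`. -/

section IntegrationByParts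

variable {g g' g'' : ℝ → ℂ}

theorem intCast_sq_mul_integral_mul_cos (hg : ∀ θ, HasDerivAt g (g' θ) θ)
    (hg' : ∀ θ, HasDerivAt g' (g'' θ) θ) (hg'' : Continuous g'') (h0 : g' 0 = 0)
    (hπ : g' π = 0) (k : ℤ) :
    (k : ℂ) ^ 2 * ∫ θ in (0 : ℝ)..π, g θ * Real.cos (k * θ) =
      -∫ θ in (0 : ℝ)..π, g'' θ * Real.cos (k * θ) := by
  have hsin : ∀ θ, HasDerivAt (fun θ : ℝ => (Real.sin (k * θ) : ℂ)) (k * Real.cos (k * θ)) θ :=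
    fun θ => by
      simpa [mul_comm] using ((Real.hasDerivAt_sin _).comp θ
        ((hasDerivAt_id θ).const_mul (k : ℝ))).ofReal_comp
  have hcos : ∀ θ, HasDerivAt (fun θ : ℝ => -(Real.cos (k * θ) : ℂ)) (k * Real.sin (k * θ)) θ :=
    fun θ => ((Real.hasDerivAt_cos _).comp θ
      ((hasDerivAt_id θ).const_mul (k : ℝ))).ofReal_comp.neg.congr_deriv (by simp; ring)
  have hg'_cont : Continuous g' := Differentiable.continuous fun θ => (hg' θ).differentiableAt
  have ibp₁ := intervalIntegral.integral_mul_deriv_eq_deriv_mul (a := 0) (b := π)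
    (fun θ _ => hg θ) (fun θ _ => hsin θ) (hg'_cont.intervalIntegrable _ _)
    ((by fun_prop : Continuous fun θ : ℝ => (k : ℂ) * Real.cos (k * θ)).intervalIntegrable _ _)
  have ibp₂ := intervalIntegral.integral_mul_deriv_eq_deriv_mul (a := 0) (b := π)
    (fun θ _ => hg' θ) (fun θ _ => hcos θ) (hg''.intervalIntegrable _ _)
    ((by fun_prop : Continuous fun θ : ℝ => (k : ℂ) * Real.sin (k * θ)).intervalIntegrable _ _)
  have hsinπ : Real.sin (k * π) = 0 := Real.sin_int_mul_pi k
  simp only [hsinπ, h0, hπ, mul_zero, zero_mul, Real.sin_zero, Complex.ofReal_zero, sub_zero,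
    zero_sub, mul_neg, intervalIntegral.integral_neg] at ibp₁ ibp₂
  simp only [mul_left_comm _ (k : ℂ), intervalIntegral.integral_const_mul] at ibp₁ ibp₂
  rw [sq, mul_assoc, ibp₁, mul_neg, ibp₂]
  ring

theorem summable_integral_mul_cos_intCast_mul (hg : ∀ θ, HasDerivAt g (g' θ) θ)
    (hg' : ∀ θ, HasDerivAt g' (g'' θ) θ) (hg'' : Continuous g'') (h0 : g' 0 = 0)
    (hπ : g' π = 0) :
    Summable fun k : ℤ => ∫ θ in (0 : ℝ)..π, g θ * Real.cos (k * θ) := by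
  obtain ⟨M, hM⟩ :=
    isCompact_Icc.exists_bound_of_continuousOn (hg''.continuousOn (s := Set.Icc 0 π))
  refine Summable.of_norm_bounded_eventually
    ((Real.summable_one_div_int_pow.2 one_lt_two).mul_left (M * π)) ?_
  filter_upwards [(Set.finite_singleton (0 : ℤ)).compl_mem_cofinite] with k hk
  have hk : (k : ℝ) ≠ 0 := Int.cast_ne_zero.2 hk
  have hbound : ‖∫ θ in (0 : ℝ)..π, g'' θ * Real.cos (k * θ)‖ ≤ M * π := by
    have := intervalIntegral.norm_integral_le_of_norm_le_const (a := 0) (b := π)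
      (f := fun θ => g'' θ * Real.cos (k * θ)) (C := M) fun θ hθ => by
        rw [norm_mul, Complex.norm_real, Real.norm_eq_abs]
        rw [Set.uIoc_of_le Real.pi_pos.le] at hθ
        exact (mul_le_of_le_one_right (norm_nonneg _) (Real.abs_cos_le_one _)).trans
          (hM θ (Set.Ioc_subset_Icc_self hθ))
    rwa [sub_zero, abs_of_pos Real.pi_pos] at this
  have := congrArg norm (intCast_sq_mul_integral_mul_cos hg hg' hg'' h0 hπ k)
  rw [norm_mul, norm_neg, norm_pow, Complex.norm_intCast, sq_abs] at this
  rw [mul_one_div, le_div_iff₀ (by positivity), mul_comm]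
  exact_mod_cast this ▸ hbound

end IntegrationByParts

theorem hasDerivAt_exp_mul_cos (t : ℂ) (θ : ℝ) :
    HasDerivAt (fun θ : ℝ => Complex.exp (t * Real.cos θ))
      (-(t * Real.sin θ) * Complex.exp (t * Real.cos θ)) θ :=
  (((Real.hasDerivAt_cos θ).ofReal_comp.const_mul t).cexp).congr_deriv (by push_cast; ring)

theorem hasDerivAt_sin_mul_exp_mul_cos (t : ℂ) (θ : ℝ) :
    HasDerivAt (fun θ : ℝ => -(t * Real.sin θ) * Complex.exp (t * Real.cos θ))
      ((t ^ 2 * Real.sin θ ^ 2 - t * Real.cos θ) * Complex.exp (t * Real.cos θ)) θ :=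
  (((Real.hasDerivAt_sin θ).ofReal_comp.const_mul t).neg.mul
    (hasDerivAt_exp_mul_cos t θ)).congr_deriv (by simp only [Pi.neg_apply]; push_cast; ring)

theorem summable_norm_besselI_intCast (t : ℂ) : Summable fun k : ℤ => ‖besselI k t‖ := by
  refine summable_norm_iff.2 ?_
  simpa only [besselI] using (summable_integral_mul_cos_intCast_mul (hasDerivAt_exp_mul_cos t)
    (hasDerivAt_sin_mul_exp_mul_cos t) (by fun_prop) (by simp) (by simp)).mul_left (π : ℂ)⁻¹

theorem summable_norm_besselI_add_mul (t : ℂ) (a : ℤ) {m : ℤ} (hm : m ≠ 0) :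
    Summable fun k : ℤ => ‖besselI ((a + m * k : ℤ) : ℝ) t‖ :=
  (summable_norm_besselI_intCast t).comp_injective
    ((add_right_injective a).comp (mul_right_injective₀ hm))

section PiProduct

variable {R α : Type*} [NormedCommRing R]

theorem summable_norm_prod_pi {n : ℕ} {f : Fin n → α → R}
    (hf : ∀ j, Summable fun a => ‖f j a‖) :
    Summable fun k : Fin n → α => ‖∏ j, f j (k j)‖ := by
  induction n with
  | zero => exact .of_finite
  | succ n ih =>
    refine ((hf 0).mul_norm (ih fun j => hf j.succ)).comp_injective
      (Fin.consEquiv fun _ => α).symm.injective |>.congr fun k => ?_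
    simp [Fin.prod_univ_succ, Fin.consEquiv, Fin.tail]

theorem tsum_prod_pi [CompleteSpace R] {n : ℕ} {f : Fin n → α → R}
    (hf : ∀ j, Summable fun a => ‖f j a‖) :
    ∑' k : Fin n → α, ∏ j, f j (k j) = ∏ j, ∑' a, f j a := by
  induction n with
  | zero => simp
  | succ n ih =>
    rw [Fin.prod_univ_succ, ← ih fun j => hf j.succ,
      tsum_mul_tsum_of_summable_norm (hf 0) (summable_norm_prod_pi fun j => hf j.succ),
      ← (Fin.consEquiv fun _ => α).tsum_eq]
    simp [Fin.prod_univ_succ, Fin.consEquiv]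

end PiProduct

open Finset in
theorem nComp_eq_card_filter_val {m n : ℕ} [NeZero m] (c : Fin n → ZMod m) {ℓ : ℕ}
    (hℓ : ℓ < m) : nComp c ℓ = #{j | (c j).val = ℓ} := by
  rw [nComp, Nat.card_eq_fintype_card, Fintype.card_subtype]
  congr 1
  ext j
  simp only [mem_filter, mem_univ, true_and]
  constructor
  · rintro h; rw [h, ZMod.val_natCast_of_lt hℓ]
  · rintro h; rw [← h, ZMod.natCast_zmod_val]

open Finset in
theorem prod_val_eq_prod_pow_nComp {M : Type*} [CommMonoid M] {m n : ℕ} [NeZero m]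
    (c : Fin n → ZMod m) (X : ℕ → M) :
    ∏ j, X (c j).val = ∏ ℓ ∈ range m, X ℓ ^ nComp c ℓ := by
  rw [← prod_fiberwise_of_maps_to' (t := range m) fun j _ => mem_range.2 (c j).val_lt]
  refine prod_congr rfl fun ℓ hℓ => ?_
  rw [prod_const, nComp_eq_card_filter_val c (mem_range.1 hℓ)]

def ZMod.valAddMulEquiv (m : ℕ) [NeZero m] : ZMod m × ℤ ≃ ℤ where
  toFun p := p.1.val + m * p.2
  invFun a := (a, a / m)
  left_inv p := by
    have hm : (m : ℤ) ≠ 0 := Int.natCast_ne_zero.2 (NeZero.ne m)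
    ext
    · push_cast [ZMod.natCast_val, ZMod.cast_id', ZMod.natCast_self]; ring
    · dsimp only
      rw [Int.add_mul_ediv_left _ _ hm, Int.ediv_eq_zero_of_lt (by positivity)
        (by exact_mod_cast p.1.val_lt), zero_add]
  right_inv a := by
    dsimp only
    rw [ZMod.val_intCast, Int.emod_add_mul_ediv]

theorem ZMod.intCast_valAddMulEquiv (m : ℕ) [NeZero m] (p : ZMod m × ℤ) :
    ((ZMod.valAddMulEquiv m p : ℤ) : ZMod m) = p.1 :=
  congrArg Prod.fst ((ZMod.valAddMulEquiv m).symm_apply_apply p)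

def ZMod.piValAddMulEquiv (ι : Type*) (m : ℕ) [NeZero m] : (ι → ZMod m) × (ι → ℤ) ≃ (ι → ℤ) :=
  (Equiv.arrowProdEquivProdArrow ι _ _).symm.trans
    (Equiv.piCongrRight fun _ => ZMod.valAddMulEquiv m)

def cosetProdEquiv {ι : Type*} (m : ℕ) [NeZero m] (B : Set (ι → ZMod m)) :
    B × (ι → ℤ) ≃ {γ : ι → ℤ // (fun i => (γ i : ZMod m)) ∈ B} :=
  Equiv.prodSubtypeFstEquivSubtypeProd.symm.trans <|
    (ZMod.piValAddMulEquiv ι m).subtypeEquiv fun p => by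
      have : (fun i => (ZMod.piValAddMulEquiv ι m p i : ZMod m)) = p.1 :=
        funext fun i => ZMod.intCast_valAddMulEquiv m (p.1 i, p.2 i)
      rw [this]

def cosetTranslateEquiv {ι : Type*} (m : ℕ) (C : Set (ι → ZMod m)) (x : ι → ℤ) :
    {w : ι → ℤ // (fun i => (w i : ZMod m)) ∈ C} ≃
      {γ : ι → ℤ // (fun i => (γ i : ZMod m)) ∈ (fun c => (fun i => (x i : ZMod m)) + c) '' C} :=
  (Equiv.addLeft x).subtypeEquiv fun w => by
    have : (fun i => ((x + w) i : ZMod m)) = (fun i => (x i : ZMod m)) + fun i => (w i : ZMod m) :=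
      funext fun i => Int.cast_add _ _
    rw [Equiv.coe_addLeft, this, (add_right_injective _).mem_set_image]

/-- Lemma 4.2 of the paper: for a linear code `C` over `ℤ/mℤ` of
length `n`, `x ∈ ℤ^n` and `t ∈ ℂ`:
`Σ_{γ ∈ x+ρ⁻¹(C)} ∏_j I_{γ_j}(t) = cwe_{ρ(x)+C}(A_0(t),…,A_{m−1}(t))`. -/
theorem besselI_coset_sum_eq_cwe (m n : ℕ) (hm : 2 ≤ m)
    (C : Submodule (ZMod m) (Fin n → ZMod m)) (x : Fin n → ℤ) (t : ℂ) :
    ∑' w : {w : Fin n → ℤ // (fun i => ((w i : ZMod m))) ∈ C},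
      ∏ j, besselI (((x j + (w : Fin n → ℤ) j : ℤ) : ℝ)) t =
    cwe ((fun c => (fun i => ((x i : ZMod m))) + c) '' (C : Set (Fin n → ZMod m)))
      (fun ℓ => Aseq m (ℓ : ℤ) t) := by
  have : NeZero m := ⟨by omega⟩
  set B := (fun c => (fun i => ((x i : ZMod m))) + c) '' (C : Set (Fin n → ZMod m))
  calc _ = ∑' γ : {γ : Fin n → ℤ // (fun i => (γ i : ZMod m)) ∈ B}, ∏ j, besselI (γ.1 j : ℝ) t :=
        (cosetTranslateEquiv m C x).tsum_eq fun γ => ∏ j, besselI (γ.1 j : ℝ) t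
    _ = ∑' p : B × (Fin n → ℤ), ∏ j, besselI (((p.1.1 j).val + m * p.2 j : ℤ) : ℝ) t :=
        ((cosetProdEquiv m B).tsum_eq fun γ => ∏ j, besselI (γ.1 j : ℝ) t).symm
    _ = ∑' c : B, ∑' k : Fin n → ℤ, ∏ j, besselI (((c.1 j).val + m * k j : ℤ) : ℝ) t :=
        have hsummable := (summable_norm_prod_pi fun _ => summable_norm_besselI_intCast t).of_norm
        ((cosetProdEquiv m B).summable_iff.2 (hsummable.subtype _)).tsum_prod
    _ = ∑' c : B, ∏ j, Aseq m (c.1 j).val t := tsum_congr fun c => by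
        rw [tsum_prod_pi fun j => summable_norm_besselI_add_mul t _
          (Int.natCast_ne_zero.2 (NeZero.ne m))]
        simp [Aseq]
    _ = cwe B _ := tsum_congr fun c => prod_val_eq_prod_pow_nComp c.1 fun ℓ => Aseq m ℓ t
end
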